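/- In a simply-laced triangle-free Coxeter system, if φ is a Fibonacci link of rank r, then the braid graph B(φ) is isomorphic to the Fibonacci cube 𝔽_r, the subgraph of the hypercube Q_r induced by binary strings of length r containing no two consecutive 1's. -/

import Mathlib

open List

namespace BraidFormal

variable {B : Type*}

/-- A single braid move: replace a factor `s t s` with `t s t` where `m(s,t) = 3`. -/
def IsBraidMove (M : CoxeterMatrix B) (w w' : List B) : Prop :=
  ∃ (u v : List B) (s t : B), M s t = 3 ∧
    w = u ++ [s, t, s] ++ v ∧ w' = u ++ [t, s, t] ++ v

/-- Braid equivalence: the reflexive-transitive closure of braid moves. -/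
def BraidEquiv (M : CoxeterMatrix B) : List B → List B → Prop :=
  Relation.ReflTransGen (IsBraidMove M)

/-- The braid class of a word. -/
def BraidClass (M : CoxeterMatrix B) (α : List B) : Set (List B) :=
  {β | BraidEquiv M α β}

/-- `w` has a braid shadow at (0-based) positions `i, i+1, i+2`:
the letters there are `s, t, s` with `m(s,t) = 3`.
(This corresponds to the 1-based interval `⟦i+1, i+3⟧` of the paper.) -/
def HasShadowAt (M : CoxeterMatrix B) (w : List B) (i : ℕ) : Prop :=
  ∃ s t : B, M s t = 3 ∧ w[i]? = some s ∧ w[i+1]? = some t ∧ w[i+2]? = some s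

/-- The braid class of `α` has a braid shadow at position `i`. -/
def ClassHasShadowAt (M : CoxeterMatrix B) (α : List B) (i : ℕ) : Prop :=
  ∃ β ∈ BraidClass M α, HasShadowAt M β i

/-- The rank of a reduced expression: the number of braid shadows of its braid class. -/
noncomputable def rank (M : CoxeterMatrix B) (α : List B) : ℕ :=
  Set.ncard {i | ClassHasShadowAt M α i}

/-- A Coxeter matrix is simply laced if all entries are at most 3. -/
def SimplyLaced (M : CoxeterMatrix B) : Prop := ∀ s t : B, M s t ≤ 3

/-- A Coxeter matrix is triangle free if its Coxeter graph has no three-cycles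
(all of whose edges are labelled 3). -/
def TriangleFree (M : CoxeterMatrix B) : Prop :=
  ∀ s t u : B, s ≠ t → t ≠ u → s ≠ u → M s t = 3 → M t u = 3 → M s u ≠ 3

/-- The set of generators appearing in (0-based) position `k` of some word in the
braid class of `α`. -/
def classSupp (M : CoxeterMatrix B) (α : List B) (k : ℕ) : Set B :=
  {s | ∃ β ∈ BraidClass M α, β[k]? = some s}

/-- The set of generators appearing in (0-based) positions `i` through `j` of `w`. -/
def suppInterval (w : List B) (i j : ℕ) : Set B :=
  {s | ∃ k, i ≤ k ∧ k ≤ j ∧ w[k]? = some s}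

variable {W : Type*} [Group W] {M : CoxeterMatrix B}

/-- `α` is a link of rank `r`: a reduced expression of length `2r+1` whose braid class
has braid shadows exactly at the (0-based) positions `0, 2, 4, …, 2r-2`
(the 1-based intervals `⟦1,3⟧, ⟦3,5⟧, …, ⟦2r-1,2r+1⟧`). -/
def IsLink (cs : CoxeterSystem M W) (α : List B) (r : ℕ) : Prop :=
  cs.IsReduced α ∧ α.length = 2 * r + 1 ∧
    ∀ i : ℕ, ClassHasShadowAt M α i ↔ ∃ j < r, i = 2 * j

/-- A Fibonacci link: a link all of whose braid-class braid shadows are braid shadows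
of the link itself. -/
def IsFibLink (cs : CoxeterSystem M W) (φ : List B) (r : ℕ) : Prop :=
  IsLink cs φ r ∧ ∀ i : ℕ, ClassHasShadowAt M φ i → HasShadowAt M φ i

/-- The hypercube graph `Q_r`: vertices are binary strings of length `r`, adjacent
exactly when they differ in a single coordinate (Hamming distance one). -/
def hypercube (r : ℕ) : SimpleGraph (Fin r → Bool) :=
  SimpleGraph.fromRel (fun x y => hammingDist x y = 1)

/-- An isometric embedding of graphs: a map preserving the geodesic distance. -/
def IsIsometricEmbedding {V V' : Type*} (G : SimpleGraph V) (H : SimpleGraph V')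
    (f : V → V') : Prop :=
  ∀ u v : V, G.dist u v = H.dist (f u) (f v)

/-- A partial cube: a connected graph isometrically embeddable into some hypercube. -/
def IsPartialCube {V : Type*} (G : SimpleGraph V) : Prop :=
  G.Connected ∧ ∃ (r : ℕ) (f : V → Fin r → Bool), IsIsometricEmbedding G (hypercube r) f

/-- The isometric dimension of a graph: the least dimension of a hypercube into which
it embeds isometrically. -/
noncomputable def isoDim {V : Type*} (G : SimpleGraph V) : ℕ :=
  sInf {r : ℕ | ∃ f : V → Fin r → Bool, IsIsometricEmbedding G (hypercube r) f}

/-- The braid graph of `α`: vertices are the members of the braid class of `α`,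
with edges given by single braid moves. -/
def braidGraph (M : CoxeterMatrix B) (α : List B) : SimpleGraph (BraidClass M α) :=
  SimpleGraph.fromRel (fun β γ => IsBraidMove M β.1 γ.1)

/-- A binary string has no two consecutive ones. -/
def NoConsecOnes {r : ℕ} (x : Fin r → Bool) : Prop :=
  ∀ (i : Fin r) (h : (i : ℕ) + 1 < r), ¬(x i = true ∧ x ⟨(i : ℕ) + 1, h⟩ = true)

/-!
The shadows of `φ` force `φ = a t₀ a t₁ ⋯ a t_{r-1} a` with `m(a, tⱼ) = 3`; since `2j + 1` is
not a shadow position, `tⱼ ≠ tⱼ₊₁`, and triangle-freeness gives `m(tⱼ, tⱼ₊₁) ≠ 3`. For a bit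
string `X` without two consecutive ones, `fibWord a t X` is `φ` with the block `a tⱼ a` at
positions `2j, 2j+1, 2j+2` replaced by `tⱼ a tⱼ` for every set bit `j` (two such blocks overlap
only when adjacent bits are set). Flipping bit `j` is a braid move at `2j`. Conversely, a braid
move of such a word sits at a shadow, hence at some `2j`, and is that flip: turning bit `j` on
next to a set bit would need the shadow `tⱼ₋₁ tⱼ tⱼ₋₁` or `tⱼ₊₁ tⱼ tⱼ₊₁`, excluded by
`m(tⱼ, tⱼ₊₁) ≠ 3`. So the braid class consists of the words `fibWord a t X`, and its braid graph
is the Fibonacci cube.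
-/

def IsBraidMoveAt (M : CoxeterMatrix B) (w w' : List B) (p : ℕ) : Prop :=
  ∃ (u v : List B) (s t : B), u.length = p ∧ M s t = 3 ∧
    w = u ++ [s, t, s] ++ v ∧ w' = u ++ [t, s, t] ++ v

theorem isBraidMove_iff_exists_isBraidMoveAt {w w' : List B} :
    IsBraidMove M w w' ↔ ∃ p, IsBraidMoveAt M w w' p :=
  ⟨fun ⟨u, v, s, t, h⟩ => ⟨u.length, u, v, s, t, rfl, h⟩,
    fun ⟨_, u, v, s, t, _, h⟩ => ⟨u, v, s, t, h⟩⟩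

theorem IsBraidMoveAt.symm {w w' : List B} {p : ℕ} (h : IsBraidMoveAt M w w' p) :
    IsBraidMoveAt M w' w p := by
  obtain ⟨u, v, s, t, hu, hst, rfl, rfl⟩ := h
  exact ⟨u, v, t, s, hu, M.symmetric s t ▸ hst, rfl, rfl⟩

theorem IsBraidMoveAt.hasShadowAt {w w' : List B} {p : ℕ} (h : IsBraidMoveAt M w w' p) :
    HasShadowAt M w p := by
  obtain ⟨u, v, s, t, rfl, hst, rfl, rfl⟩ := h
  exact ⟨s, t, hst, by simp, by simp, by simp⟩

theorem IsBraidMoveAt.right_unique {w w₁ w₂ : List B} {p : ℕ} (h₁ : IsBraidMoveAt M w w₁ p)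
    (h₂ : IsBraidMoveAt M w w₂ p) : w₁ = w₂ := by
  obtain ⟨u, v, s, t, rfl, -, rfl, rfl⟩ := h₁
  obtain ⟨u', v', s', t', hu, -, hw, rfl⟩ := h₂
  obtain ⟨rfl, hw⟩ := List.append_inj (by simpa using hw) hu.symm
  simp_all

theorem eq_take_append_drop_of_getElem? {w : List B} {p : ℕ} {s₀ s₁ s₂ : B}
    (h₀ : w[p]? = some s₀) (h₁ : w[p + 1]? = some s₁) (h₂ : w[p + 2]? = some s₂) :
    w = w.take p ++ [s₀, s₁, s₂] ++ w.drop (p + 3) := by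
  obtain ⟨hp, rfl⟩ := List.getElem?_eq_some_iff.1 h₂
  obtain ⟨_, rfl⟩ := List.getElem?_eq_some_iff.1 h₁
  obtain ⟨_, rfl⟩ := List.getElem?_eq_some_iff.1 h₀
  conv_lhs => rw [← List.take_append_drop p w, List.drop_eq_getElem_cons (by omega),
    List.drop_eq_getElem_cons (by omega), List.drop_eq_getElem_cons hp]
  simp

theorem isBraidMoveAt_of_getElem? {w w' : List B} {p : ℕ} {s t : B} (hst : M s t = 3)
    (h₀ : w[p]? = some s) (h₁ : w[p + 1]? = some t) (h₂ : w[p + 2]? = some s)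
    (h₀' : w'[p]? = some t) (h₁' : w'[p + 1]? = some s) (h₂' : w'[p + 2]? = some t)
    (hfar : ∀ q, q < p ∨ p + 2 < q → w'[q]? = w[q]?) : IsBraidMoveAt M w w' p := by
  refine ⟨w.take p, w.drop (p + 3), s, t, ?_, hst,
    eq_take_append_drop_of_getElem? h₀ h₁ h₂, ?_⟩
  · have := (List.getElem?_eq_some_iff.1 h₂).1
    simp only [List.length_take]
    omega
  · have htake : w'.take p = w.take p := List.ext_getElem? fun q => by
      rw [List.getElem?_take, List.getElem?_take]
      split_ifs with hq
      exacts [hfar q (.inl hq), rfl]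
    have hdrop : w'.drop (p + 3) = w.drop (p + 3) := List.ext_getElem? fun q => by
      rw [List.getElem?_drop, List.getElem?_drop]
      exact hfar _ (.inr (by omega))
    rw [eq_take_append_drop_of_getElem? h₀' h₁' h₂', htake, hdrop]

theorem HasShadowAt.add_two_lt_length {w : List B} {p : ℕ} (h : HasShadowAt M w p) :
    p + 2 < w.length := by
  obtain ⟨s, -, -, -, -, h₂⟩ := h
  exact (List.getElem?_eq_some_iff.1 h₂).1

theorem ne_of_eq_three {s t : B} (h : M s t = 3) : s ≠ t := by
  rintro rfl
  simp at h

theorem hammingDist_eq_one_iff_exists_update {ι : Type*} [Fintype ι] [DecidableEq ι]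
    {X Y : ι → Bool} : hammingDist X Y = 1 ↔ ∃ i, Y = Function.update X i (!X i) := by
  rw [hammingDist, Finset.card_eq_one]
  constructor
  · rintro ⟨i, hi⟩
    have hne : ∀ j, X j ≠ Y j ↔ j = i := fun j => by
      simpa using congrArg (j ∈ ·) hi
    refine ⟨i, funext fun j => ?_⟩
    by_cases hj : j = i
    · subst hj
      have := (hne j).2 rfl
      cases hX : X j <;> simp_all
    · simpa [hj] using (not_not.1 ((hne j).not.2 hj)).symm
  · rintro ⟨i, rfl⟩
    refine ⟨i, Finset.ext fun j => ?_⟩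
    by_cases hj : j = i <;> simp [hj]

theorem hypercube_adj {r : ℕ} {X Y : Fin r → Bool} :
    (hypercube r).Adj X Y ↔ hammingDist X Y = 1 := by
  rw [hypercube, SimpleGraph.fromRel_adj, hammingDist_comm Y X, or_self]
  exact ⟨And.right, fun h => ⟨hammingDist_ne_zero.1 (by omega), h⟩⟩

def bits {r : ℕ} (X : Fin r → Bool) (j : ℕ) : Bool :=
  if h : j < r then X ⟨j, h⟩ else false

section Bits

variable {r : ℕ} (X : Fin r → Bool)

@[simp]
theorem bits_val (i : Fin r) : bits X i = X i := by
  simp [bits]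

theorem bits_of_le {j : ℕ} (hj : r ≤ j) : bits X j = false := by
  simp [bits, hj.not_gt]

theorem bits_update (i : Fin r) (v : Bool) :
    bits (Function.update X i v) = Function.update (bits X) i v := by
  funext j
  by_cases hj : j < r
  · by_cases hji : j = i
    · subst hji; simp
    · simp [bits, hj, hji, Fin.ext_iff]
  · simp [bits_of_le _ (not_lt.1 hj), (show j ≠ i by omega)]

theorem noConsecOnes_iff_bits :
    NoConsecOnes X ↔ ∀ j, bits X j = true → bits X (j + 1) = false := by
  constructor
  · intro hX j hj
    by_contra h
    have hr : j + 1 < r := by by_contra h'; exact h (bits_of_le X (by omega))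
    exact hX ⟨j, by omega⟩ hr
      ⟨by simpa [bits, (by omega : j < r)] using hj, by simpa [bits, hr] using h⟩
  · intro hX i hi ⟨h₁, h₂⟩
    simpa [bits, hi, h₂] using hX i (by simpa using h₁)

theorem NoConsecOnes.bits_succ {X : Fin r → Bool} (hX : NoConsecOnes X) {j : ℕ}
    (hj : bits X j = true) : bits X (j + 1) = false :=
  (noConsecOnes_iff_bits X).1 hX j hj

theorem NoConsecOnes.of_imp {X Y : Fin r → Bool} (hX : NoConsecOnes X)
    (hYX : ∀ i, Y i = true → X i = true) : NoConsecOnes Y :=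
  fun i hi ⟨h₁, h₂⟩ => hX i hi ⟨hYX _ h₁, hYX _ h₂⟩

theorem NoConsecOnes.update_false {X : Fin r → Bool} (hX : NoConsecOnes X) (i : Fin r) :
    NoConsecOnes (Function.update X i false) :=
  hX.of_imp fun j hj => by
    by_cases hji : j = i
    · simp_all
    · simpa [hji] using hj

theorem NoConsecOnes.update_true {X : Fin r → Bool} (hX : NoConsecOnes X) {i : Fin r}
    (hnext : bits X (i + 1) = false) (hprev : ¬(0 < (i : ℕ) ∧ bits X (i - 1) = true)) :
    NoConsecOnes (Function.update X i true) := by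
  rw [noConsecOnes_iff_bits, bits_update]
  intro j hj
  rw [Function.update_apply] at hj ⊢
  by_cases hji : j = i
  · rw [if_neg (by omega), hji]
    exact hnext
  · rw [if_neg hji] at hj
    rw [if_neg fun h => hprev ⟨by omega, by rwa [show (i : ℕ) - 1 = j by omega]⟩]
    exact hX.bits_succ hj

end Bits

section FibWord

variable (a : B) (t : ℕ → B)

def fibLetter (x : ℕ → Bool) (k : ℕ) : B :=
  if k % 2 = 1 then (if x (k / 2) then a else t (k / 2))
  else if 0 < k / 2 ∧ x (k / 2 - 1) then t (k / 2 - 1)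
  else if x (k / 2) then t (k / 2) else a

def fibWord {r : ℕ} (X : Fin r → Bool) : List B :=
  List.ofFn fun k : Fin (2 * r + 1) => fibLetter a t (bits X) k

variable (x : ℕ → Bool) {r : ℕ}

theorem fibLetter_two_mul_add_one (m : ℕ) :
    fibLetter a t x (2 * m + 1) = if x m then a else t m := by
  simp [fibLetter, Nat.add_mod, show (2 * m + 1) / 2 = m by omega]

theorem fibLetter_two_mul (m : ℕ) : fibLetter a t x (2 * m) =
    if 0 < m ∧ x (m - 1) then t (m - 1) else if x m then t m else a := by
  simp [fibLetter]

theorem fibLetter_two_mul_add_two (m : ℕ) : fibLetter a t x (2 * m + 2) =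
    if x m then t m else if x (m + 1) then t (m + 1) else a := by
  rw [show 2 * m + 2 = 2 * (m + 1) by ring, fibLetter_two_mul]
  simp

theorem fibLetter_update_of_far {j q : ℕ} (hq : q < 2 * j ∨ 2 * j + 2 < q) (v : Bool) :
    fibLetter a t (Function.update x j v) q = fibLetter a t x q := by
  obtain ⟨m, rfl | rfl⟩ := Nat.even_or_odd' q
  · rw [fibLetter_two_mul, fibLetter_two_mul, Function.update_of_ne (by omega),
      Function.update_of_ne (by omega)]
  · rw [fibLetter_two_mul_add_one, fibLetter_two_mul_add_one, Function.update_of_ne (by omega)]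

theorem length_fibWord (X : Fin r → Bool) : (fibWord a t X).length = 2 * r + 1 := by
  simp [fibWord]

theorem fibWord_getElem? (X : Fin r → Bool) (k : ℕ) :
    (fibWord a t X)[k]? = if k < 2 * r + 1 then some (fibLetter a t (bits X) k) else none := by
  rw [fibWord, List.getElem?_ofFn]
  split_ifs <;> rfl

end FibWord

section FibWordFamily

variable {a : B} {t : ℕ → B} {r : ℕ}

theorem isBraidMoveAt_fibWord_update_false (h3 : ∀ j < r, M a (t j) = 3) {X : Fin r → Bool}
    (hX : NoConsecOnes X) {i : Fin r} (hi : X i = true) :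
    IsBraidMoveAt M (fibWord a t X) (fibWord a t (Function.update X i false)) (2 * i) := by
  have hnext : bits X (i + 1) = false := hX.bits_succ (by simpa using hi)
  have hprev : ¬(0 < (i : ℕ) ∧ bits X (i - 1) = true) := fun ⟨hpos, h⟩ => by
    simpa [Nat.sub_add_cancel hpos, hi] using hX.bits_succ h
  have hr := i.2
  refine isBraidMoveAt_of_getElem? (M.symmetric a (t i) ▸ h3 i i.2) ?_ ?_ ?_ ?_ ?_ ?_
    fun q hq => by
      rw [fibWord_getElem?, fibWord_getElem?, bits_update, fibLetter_update_of_far _ _ _ hq]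
  all_goals
    simp [fibWord_getElem?, bits_update, show 2 * (i : ℕ) + 2 < 2 * r + 1 by omega,
      fibLetter_two_mul, fibLetter_two_mul_add_one, fibLetter_two_mul_add_two,
      Function.update_apply, hprev, hnext, hi] <;> tauto

theorem isBraidMoveAt_fibWord_update_not (h3 : ∀ j < r, M a (t j) = 3) {X : Fin r → Bool}
    (hX : NoConsecOnes X) {i : Fin r} (hY : NoConsecOnes (Function.update X i (!X i))) :
    IsBraidMoveAt M (fibWord a t X) (fibWord a t (Function.update X i (!X i))) (2 * i) := by
  cases hi : X i
  · convert (isBraidMoveAt_fibWord_update_false h3 hY (i := i) (by simp [hi])).symm using 2 <;>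
      simp [hi]
  · simpa using isBraidMoveAt_fibWord_update_false h3 hX hi

theorem noConsecOnes_update_of_hasShadowAt (hM : ∀ j, j + 1 < r → M (t j) (t (j + 1)) ≠ 3)
    {X : Fin r → Bool} (hX : NoConsecOnes X) {i : Fin r}
    (hsh : HasShadowAt M (fibWord a t X) (2 * i)) :
    NoConsecOnes (Function.update X i (!X i)) := by
  cases hi : X i
  · obtain ⟨s, u, hsu, h₀, h₁, h₂⟩ := hsh
    have hr := i.2
    simp only [fibWord_getElem?, if_pos (show 2 * (i : ℕ) < 2 * r + 1 by omega),
      if_pos (show 2 * (i : ℕ) + 1 < 2 * r + 1 by omega),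
      if_pos (show 2 * (i : ℕ) + 2 < 2 * r + 1 by omega), Option.some.injEq, fibLetter_two_mul,
      fibLetter_two_mul_add_one, fibLetter_two_mul_add_two, bits_val, hi, Bool.false_eq_true,
      if_false] at h₀ h₁ h₂
    have hnext : bits X (i + 1) = false := by
      by_contra h
      have hr' : (i : ℕ) + 1 < r := by by_contra h'; exact h (bits_of_le X (by omega))
      rw [Bool.not_eq_false] at h
      rw [if_pos h] at h₂
      exact hM i hr' (by rw [M.symmetric, h₂, h₁]; exact hsu)
    have hprev : ¬(0 < (i : ℕ) ∧ bits X (i - 1) = true) := fun h => by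
      rw [if_pos h] at h₀
      exact hM (i - 1) (by omega) (by rw [Nat.sub_add_cancel h.1, h₀, h₁]; exact hsu)
    simpa using hX.update_true hnext hprev
  · simpa using hX.update_false i

theorem fibWord_injective (h3 : ∀ j < r, M a (t j) = 3) :
    Function.Injective (fibWord a t : (Fin r → Bool) → List B) := by
  intro X Y h
  funext i
  have hi := congrArg (·[2 * (i : ℕ) + 1]?) h
  have hne := ne_of_eq_three (h3 i i.2)
  simp only [fibWord_getElem?, if_pos (show 2 * (i : ℕ) + 1 < 2 * r + 1 by omega),
    fibLetter_two_mul_add_one, bits_val, Option.some.injEq] at hi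
  cases hX : X i <;> cases hY : Y i <;> simp only [hX, hY] at hi ⊢ <;>
    first | rfl | exact absurd hi.symm hne | exact absurd hi hne

theorem exists_update_of_isBraidMove (h3 : ∀ j < r, M a (t j) = 3)
    (hM : ∀ j, j + 1 < r → M (t j) (t (j + 1)) ≠ 3) {X : Fin r → Bool} (hX : NoConsecOnes X)
    (hev : ∀ p, HasShadowAt M (fibWord a t X) p → Even p) {w : List B}
    (hw : IsBraidMove M (fibWord a t X) w) :
    ∃ i : Fin r, NoConsecOnes (Function.update X i (!X i)) ∧
      w = fibWord a t (Function.update X i (!X i)) := by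
  obtain ⟨p, hp⟩ := isBraidMove_iff_exists_isBraidMoveAt.1 hw
  obtain ⟨j, rfl⟩ := hev p hp.hasShadowAt
  have hj := hp.hasShadowAt.add_two_lt_length
  rw [length_fibWord] at hj
  rw [← two_mul] at hp
  have hY := noConsecOnes_update_of_hasShadowAt hM hX (i := ⟨j, by omega⟩) hp.hasShadowAt
  exact ⟨⟨j, by omega⟩, hY, hp.right_unique (isBraidMoveAt_fibWord_update_not h3 hX hY)⟩

theorem isBraidMove_fibWord_iff (h3 : ∀ j < r, M a (t j) = 3)
    (hM : ∀ j, j + 1 < r → M (t j) (t (j + 1)) ≠ 3) {X Y : Fin r → Bool} (hX : NoConsecOnes X)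
    (hY : NoConsecOnes Y) (hev : ∀ p, HasShadowAt M (fibWord a t X) p → Even p) :
    IsBraidMove M (fibWord a t X) (fibWord a t Y) ↔ hammingDist X Y = 1 := by
  rw [hammingDist_eq_one_iff_exists_update]
  constructor
  · intro hw
    obtain ⟨i, -, h⟩ := exists_update_of_isBraidMove h3 hM hX hev hw
    exact ⟨i, fibWord_injective h3 h⟩
  · rintro ⟨i, rfl⟩
    exact isBraidMove_iff_exists_isBraidMoveAt.2 ⟨_, isBraidMoveAt_fibWord_update_not h3 hX hY⟩

theorem braidEquiv_fibWord (h3 : ∀ j < r, M a (t j) = 3) {X : Fin r → Bool}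
    (hX : NoConsecOnes X) : BraidEquiv M (fibWord a t fun _ : Fin r => false) (fibWord a t X) := by
  suffices ∀ S : Finset (Fin r), NoConsecOnes (· ∈ S) →
      BraidEquiv M (fibWord a t fun _ : Fin r => false) (fibWord a t (· ∈ S)) by
    simpa using this {i | X i} (by simpa using hX)
  intro S
  induction S using Finset.induction_on with
  | empty =>
    simp only [Finset.notMem_empty, decide_false]
    exact fun _ => Relation.ReflTransGen.refl
  | insert i S hiS ih =>
    intro hS
    have hS' : Function.update (fun j => decide (j ∈ insert i S)) i false = (· ∈ S) := by
      funext j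
      by_cases hji : j = i
      · simp [hji, hiS]
      · simp [hji]
    refine (ih (hS.of_imp fun j hj => by simp_all)).tail ?_
    have := isBraidMoveAt_fibWord_update_false (a := a) (t := t) h3 hS (i := i) (by simp)
    rw [hS'] at this
    exact isBraidMove_iff_exists_isBraidMoveAt.2 ⟨_, this.symm⟩

theorem mem_braidClass_fibWord_iff (h3 : ∀ j < r, M a (t j) = 3)
    (hM : ∀ j, j + 1 < r → M (t j) (t (j + 1)) ≠ 3)
    (hev : ∀ p, ClassHasShadowAt M (fibWord a t fun _ : Fin r => false) p → Even p)
    {β : List B} : β ∈ BraidClass M (fibWord a t fun _ : Fin r => false) ↔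
      ∃ X : Fin r → Bool, NoConsecOnes X ∧ β = fibWord a t X := by
  constructor
  · intro hβ
    induction hβ with
    | refl => exact ⟨fun _ => false, fun _ _ h => by simp at h, rfl⟩
    | tail hβ hw ih =>
      obtain ⟨X, hX, rfl⟩ := ih
      obtain ⟨i, hY, rfl⟩ :=
        exists_update_of_isBraidMove h3 hM hX (fun p hp => hev p ⟨_, hβ, hp⟩) hw
      exact ⟨_, hY, rfl⟩
  · rintro ⟨X, hX, rfl⟩
    exact braidEquiv_fibWord h3 hX

theorem nonempty_braidGraph_fibWord_iso (h3 : ∀ j < r, M a (t j) = 3)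
    (hM : ∀ j, j + 1 < r → M (t j) (t (j + 1)) ≠ 3)
    (hev : ∀ p, ClassHasShadowAt M (fibWord a t fun _ : Fin r => false) p → Even p) :
    Nonempty (braidGraph M (fibWord a t fun _ : Fin r => false) ≃g
      (hypercube r).induce {X | NoConsecOnes X}) := by
  let F (X : {X : Fin r → Bool | NoConsecOnes X}) :
      BraidClass M (fibWord a t fun _ : Fin r => false) :=
    ⟨fibWord a t X.1, by exact braidEquiv_fibWord h3 X.2⟩
  have hF : Function.Bijective F := by
    refine ⟨fun X Y h => Subtype.ext (fibWord_injective h3 (congrArg Subtype.val h)), ?_⟩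
    rintro ⟨β, hβ⟩
    obtain ⟨X, hX, rfl⟩ := (mem_braidClass_fibWord_iff h3 hM hev).1 hβ
    exact ⟨⟨X, hX⟩, rfl⟩
  refine ⟨(⟨Equiv.ofBijective F hF, fun {X Y} => ?_⟩ : _ ≃g _).symm⟩
  have hmove : ∀ X Y : {X : Fin r → Bool | NoConsecOnes X},
      IsBraidMove M (F X).1 (F Y).1 ↔ hammingDist X.1 Y.1 = 1 := fun X Y =>
    isBraidMove_fibWord_iff h3 hM X.2 Y.2 fun p hp => hev p ⟨_, (F X).2, hp⟩
  rw [Equiv.ofBijective_apply, Equiv.ofBijective_apply, braidGraph, SimpleGraph.fromRel_adj,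
    SimpleGraph.induce_adj, hypercube_adj, hmove, hmove, hammingDist_comm, or_self, hF.1.ne_iff]
  exact ⟨And.right, fun h => ⟨fun hXY => by simp [hXY] at h, h⟩⟩

end FibWordFamily

theorem IsFibLink.exists_eq_fibWord {cs : CoxeterSystem M W} {φ : List B} {r : ℕ}
    (htf : TriangleFree M) (hfib : IsFibLink cs φ r) :
    ∃ (a : B) (t : ℕ → B), (∀ j < r, M a (t j) = 3) ∧
      (∀ j, j + 1 < r → M (t j) (t (j + 1)) ≠ 3) ∧ φ = fibWord a t fun _ : Fin r => false := by
  obtain ⟨⟨-, hlen, hsha⟩, hself⟩ := hfib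
  have hsh : ∀ j < r, HasShadowAt M φ (2 * j) := fun j hj => hself _ ((hsha _).2 ⟨j, hj, rfl⟩)
  set a := φ[0]'(by omega)
  set t : ℕ → B := fun j => φ.getD (2 * j + 1) a
  have heven : ∀ j ≤ r, φ[2 * j]? = some a := by
    intro j
    induction j with
    | zero => exact fun _ => List.getElem?_eq_getElem _
    | succ j ih =>
      intro hj
      obtain ⟨s, u, -, h₀, -, h₂⟩ := hsh j (by omega)
      rw [ih (by omega)] at h₀
      rw [show 2 * (j + 1) = 2 * j + 2 by ring, h₂, h₀]
  have hodd : ∀ j < r, φ[2 * j + 1]? = some (t j) := fun j hj => by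
    simp [t, List.getElem?_eq_getElem (show 2 * j + 1 < φ.length by omega)]
  have h3 : ∀ j < r, M a (t j) = 3 := by
    intro j hj
    obtain ⟨s, u, hsu, h₀, h₁, -⟩ := hsh j hj
    rw [heven j hj.le, Option.some_inj] at h₀
    rw [hodd j hj, Option.some_inj] at h₁
    rwa [h₀, h₁]
  have hM : ∀ j, j + 1 < r → M (t j) (t (j + 1)) ≠ 3 := by
    intro j hj
    have htt : t j ≠ t (j + 1) := fun h => by
      have hodd_shadow : HasShadowAt M φ (2 * j + 1) :=
        ⟨t j, a, M.symmetric a (t j) ▸ h3 j (by omega), hodd j (by omega),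
          by rw [show 2 * j + 1 + 1 = 2 * (j + 1) by ring]; exact heven (j + 1) (by omega),
          by rw [show 2 * j + 1 + 2 = 2 * (j + 1) + 1 by ring, h]; exact hodd (j + 1) hj⟩
      obtain ⟨k, -, hk⟩ := (hsha _).1 ⟨φ, .refl, hodd_shadow⟩
      omega
    exact htf (t j) a (t (j + 1)) (ne_of_eq_three (h3 j (by omega))).symm
      (ne_of_eq_three (h3 (j + 1) hj)) htt (M.symmetric a (t j) ▸ h3 j (by omega))
      (h3 (j + 1) hj)
  refine ⟨a, t, h3, hM, List.ext_getElem? fun q => ?_⟩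
  rw [fibWord_getElem?]
  split_ifs with hq
  · obtain ⟨m, rfl | rfl⟩ := Nat.even_or_odd' q
    · simp [fibLetter_two_mul, bits, heven m (by omega)]
    · simp [fibLetter_two_mul_add_one, bits, hodd m (by omega)]
  · exact List.getElem?_eq_none (by omega)

theorem statement_17_general {B W : Type*} [Group W] {M : CoxeterMatrix B}
    (cs : CoxeterSystem M W) (htf : TriangleFree M)
    (φ : List B) (r : ℕ) (hfib : IsFibLink cs φ r) :
    Nonempty (braidGraph M φ ≃g
      (hypercube r).induce {x : Fin r → Bool | NoConsecOnes x}) := by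
  obtain ⟨a, t, h3, hM, rfl⟩ := hfib.exists_eq_fibWord htf
  refine nonempty_braidGraph_fibWord_iso h3 hM fun p hp => ?_
  obtain ⟨j, -, rfl⟩ := (hfib.1.2.2 p).1 hp
  exact even_two_mul j

/-- the braid graph of a Fibonacci link of rank `r` is isomorphic to the
Fibonacci cube `𝔽_r`, the subgraph of `Q_r` induced by the binary strings with no two
consecutive ones. -/
theorem statement_17 {B W : Type*} [Group W] {M : CoxeterMatrix B}
    (cs : CoxeterSystem M W) (hsl : SimplyLaced M) (htf : TriangleFree M)
    (φ : List B) (r : ℕ) (hfib : IsFibLink cs φ r) :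
    Nonempty (braidGraph M φ ≃g
      (hypercube r).induce {x : Fin r → Bool | NoConsecOnes x}) :=
  statement_17_general cs htf φ r hfib

end BraidFormal
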